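/- For U ∈ SU(2), define n(U) ∈ ℝ³ by n(U)ᵢ = −(1/2)·Re tr(ωᵢ Uᴴ ω₃ U) for i = 1, 2, 3 (the trace here is in fact real). Then: (1) n(U) is a unit vector for every U ∈ SU(2); (2) the map n is surjective onto the unit sphere S² ⊂ ℝ³; and (3) for U, V ∈ SU(2), n(U) = n(V) if and only if V·U⁻¹ is a diagonal matrix (equivalently, V·U⁻¹ = diag(e^{−iθ}, e^{iθ}) for some real θ). Hence n induces a bijection between the coset space A\SU(2), where A is the subgroup of diagonal matrices in SU(2), and the unit sphere S². -/

import Mathlib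

/-- The matrices `ωⱼ = −i σⱼ` (for the Pauli matrices `σⱼ`):
`ω₁ = [[0, −i], [−i, 0]]`, `ω₂ = [[0, −1], [1, 0]]`, `ω₃ = [[−i, 0], [0, i]]`. -/
def omegaMat : Fin 3 → Matrix (Fin 2) (Fin 2) ℂ :=
  ![!![0, -Complex.I; -Complex.I, 0],
    !![0, -1; 1, 0],
    !![-Complex.I, 0; 0, Complex.I]]

/-- The vector `n(U) ∈ ℝ³`, `n(U)ᵢ = −(1/2)·Re tr(ωᵢ Uᴴ ω₃ U)`. -/
noncomputable def nvec (U : Matrix (Fin 2) (Fin 2) ℂ) : Fin 3 → ℝ :=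
  fun i => -(1 / 2 : ℝ) * ((omegaMat i * U.conjTranspose * omegaMat 2 * U).trace).re


/-! Writing `U ∈ SU(2)` as `[[a, b], [−b̄, ā]]` with `|a|² + |b|² = 1`, the vector `n(U)` is the
Hopf map `(2 Re(ā b), −2 Im(ā b), |a|² − |b|²)` of the unit vector `(a, b) ∈ ℂ²`. Its squared
norm is `(|a|² + |b|²)²`, every point of `S²` has an explicit preimage, and the Hopf map
determines `(a, b)` up to a phase `p`; multiplying the first row by `p` is left multiplication
by `diag(p, p̄)`. -/

open Complex Matrix ComplexConjugate

noncomputable def su2Mat (a b : ℂ) : Matrix (Fin 2) (Fin 2) ℂ :=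
  !![a, b; -conj b, conj a]

noncomputable def hopfMap (a b : ℂ) : Fin 3 → ℝ :=
  ![2 * (conj a * b).re, -2 * (conj a * b).im, normSq a - normSq b]

lemma su2Mat_conjTranspose (a b : ℂ) : (su2Mat a b)ᴴ = !![conj a, -b; conj b, a] := by
  ext i j
  fin_cases i <;> fin_cases j <;> simp [su2Mat]

lemma su2Mat_inj {a b c d : ℂ} : su2Mat a b = su2Mat c d ↔ a = c ∧ b = d := by
  refine ⟨fun h => ⟨congrFun₂ h 0 0, congrFun₂ h 0 1⟩, ?_⟩
  rintro ⟨rfl, rfl⟩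
  rfl

lemma diagonal_mul_su2Mat (p a b : ℂ) :
    diagonal ![p, conj p] * su2Mat a b = su2Mat (p * a) (p * b) := by
  ext i j
  fin_cases i <;> fin_cases j <;> simp [su2Mat]

lemma exists_eq_su2Mat {U : Matrix (Fin 2) (Fin 2) ℂ} (hU : Uᴴ * U = 1) (hdet : U.det = 1) :
    ∃ a b : ℂ, normSq a + normSq b = 1 ∧ U = su2Mat a b := by
  have hadj : Uᴴ = !![U 1 1, -U 0 1; -U 1 0, U 0 0] := by
    rw [← inv_eq_left_inv hU, Matrix.inv_def, hdet, adjugate_fin_two]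
    simp
  have h11 : U 1 1 = conj (U 0 0) := by simpa using (congrFun₂ hadj 0 0).symm
  have h10 : U 1 0 = -conj (U 0 1) := by
    have := congrFun₂ hadj 1 0
    simp only [conjTranspose_apply, RCLike.star_def, of_apply, cons_val', cons_val_one,
      cons_val_zero, empty_val', cons_val_fin_one] at this
    linear_combination this
  have hU' : U = su2Mat (U 0 0) (U 0 1) := by
    ext i j
    fin_cases i <;> fin_cases j <;> simp [su2Mat, h11, h10]
  refine ⟨U 0 0, U 0 1, ?_, hU'⟩
  have := congrArg re (hU' ▸ hdet)
  simpa [su2Mat, det_fin_two_of, mul_conj] using this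

lemma su2Mat_unitary_and_det_eq_one {a b : ℂ} (h : normSq a + normSq b = 1) :
    (su2Mat a b)ᴴ * su2Mat a b = 1 ∧ (su2Mat a b).det = 1 := by
  have h' : conj a * a + conj b * b = 1 := by
    simpa [mul_comm (conj _), mul_conj] using congrArg ((↑) : ℝ → ℂ) h
  refine ⟨?_, ?_⟩
  · rw [su2Mat_conjTranspose, su2Mat, mul_fin_two, one_fin_two]
    simp only [EmbeddingLike.apply_eq_iff_eq, vecCons_inj, and_true]
    exact ⟨⟨by linear_combination h', by ring⟩, by ring, by linear_combination h'⟩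
  · rw [su2Mat, det_fin_two_of]
    linear_combination h'

lemma nvec_su2Mat (a b : ℂ) : nvec (su2Mat a b) = hopfMap a b := by
  ext i
  rw [nvec, su2Mat_conjTranspose, su2Mat]
  fin_cases i <;>
  · simp [omegaMat, hopfMap, trace_fin_two_of, normSq_apply]
    ring

lemma sum_hopfMap_sq (a b : ℂ) : ∑ i, hopfMap a b i ^ 2 = (normSq a + normSq b) ^ 2 := by
  calc ∑ i, hopfMap a b i ^ 2
      = 4 * ((conj a * b).re * (conj a * b).re + (conj a * b).im * (conj a * b).im)
          + (normSq a - normSq b) ^ 2 := by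
        simp only [Fin.sum_univ_three, hopfMap, Fin.isValue, cons_val_zero, cons_val_one,
          cons_val_two, tail_cons, head_cons]
        ring
    _ = 4 * (normSq a * normSq b) + (normSq a - normSq b) ^ 2 := by
        rw [← normSq_apply, normSq_mul, normSq_conj]
    _ = (normSq a + normSq b) ^ 2 := by ring

lemma hopfMap_mul_left {p : ℂ} (hp : normSq p = 1) (a b : ℂ) :
    hopfMap (p * a) (p * b) = hopfMap a b := by
  have hp' : conj p * p = 1 := by rw [mul_comm, mul_conj, hp, ofReal_one]
  have key : conj (p * a) * (p * b) = conj a * b := by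
    rw [map_mul]
    linear_combination (conj a * b) * hp'
  simp only [hopfMap, key, normSq_mul, hp, one_mul]

lemma exists_mul_of_hopfMap_eq {a b c d : ℂ} (hab : normSq a + normSq b = 1)
    (hcd : normSq c + normSq d = 1) (h : hopfMap a b = hopfMap c d) :
    ∃ p : ℂ, normSq p = 1 ∧ c = p * a ∧ d = p * b := by
  have h0 : 2 * (conj a * b).re = 2 * (conj c * d).re := congrFun h 0
  have h1 : -2 * (conj a * b).im = -2 * (conj c * d).im := congrFun h 1
  have h2 : normSq a - normSq b = normSq c - normSq d := congrFun h 2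
  have hprod : conj a * b = conj c * d := Complex.ext (by linarith) (by linarith)
  have hprod' : conj b * a = conj d * c := by
    simpa [mul_comm] using congrArg conj hprod
  have hnorm (z w : ℂ) (h : normSq z = normSq w) : z * conj z = w * conj w := by
    rw [mul_conj, mul_conj, h]
  have ha := hnorm a c (by linarith)
  have hb := hnorm b d (by linarith)
  have hcd' : c * conj c + d * conj d = 1 := by
    rw [mul_conj, mul_conj]; exact_mod_cast hcd
  -- `(ā, b̄)ᵀ(a, b)` and `(c̄, d̄)ᵀ(c, d)` agree, so the phase is `⟨(a, b), (c, d)⟩`.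
  set p := conj a * c + conj b * d
  have hc : c = p * a := by linear_combination -(c * ha + d * hprod' + c * hcd')
  have hd : d = p * b := by linear_combination -(c * hprod + d * hb + d * hcd')
  refine ⟨p, ?_, hc, hd⟩
  rw [hc, hd, normSq_mul, normSq_mul, ← mul_add, hab, mul_one] at hcd
  exact hcd

lemma exists_hopfMap_eq {v : Fin 3 → ℝ} (hv : ∑ i, v i ^ 2 = 1) :
    ∃ a b : ℂ, normSq a + normSq b = 1 ∧ hopfMap a b = v := by
  rw [Fin.sum_univ_three] at hv
  -- Off the south pole `v 2 = -1` we may take `a` real and positive; at it, `a = 0`.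
  rcases eq_or_ne (v 2) (-1) with hs | hs
  · have h0 : v 0 = 0 := by nlinarith
    have h1 : v 1 = 0 := by nlinarith
    refine ⟨0, 1, by simp, ?_⟩
    ext i
    fin_cases i <;> simp [hopfMap, h0, h1, hs]
  · have hpos : 0 < (1 + v 2) / 2 := by
      have := (show -1 ≤ v 2 by nlinarith).lt_of_ne hs.symm
      linarith
    set r := √((1 + v 2) / 2)
    have hr : r ^ 2 = (1 + v 2) / 2 := Real.sq_sqrt hpos.le
    have hr0 : r ≠ 0 := (Real.sqrt_pos.2 hpos).ne'
    refine ⟨r, ⟨v 0 / (2 * r), -v 1 / (2 * r)⟩, ?_, ?_⟩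
    · simp only [normSq_apply, ofReal_re, ofReal_im, mul_zero, add_zero]
      field_simp
      linear_combination hv + (4 * r ^ 2 - 2 + 2 * v 2) * hr
    · ext i
      fin_cases i <;>
        simp only [hopfMap, conj_ofReal, mul_re, mul_im, ofReal_re, ofReal_im, zero_mul, mul_zero,
          sub_zero, add_zero, neg_mul, normSq_apply, Fin.isValue, Fin.zero_eta, Fin.mk_one,
          Fin.reduceFinMk, cons_val_zero, cons_val_one, cons_val] <;>
        field_simp
      linear_combination -hv + (4 * r ^ 2 - 2 * v 2 + 2) * hr

lemma sum_nvec_sq {U : Matrix (Fin 2) (Fin 2) ℂ} (hU : Uᴴ * U = 1) (hdet : U.det = 1) :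
    ∑ i, nvec U i ^ 2 = 1 := by
  obtain ⟨a, b, hab, rfl⟩ := exists_eq_su2Mat hU hdet
  rw [nvec_su2Mat, sum_hopfMap_sq, hab, one_pow]

lemma exists_nvec_eq {v : Fin 3 → ℝ} (hv : ∑ i, v i ^ 2 = 1) :
    ∃ U : Matrix (Fin 2) (Fin 2) ℂ, (Uᴴ * U = 1 ∧ U.det = 1) ∧ nvec U = v := by
  obtain ⟨a, b, hab, rfl⟩ := exists_hopfMap_eq hv
  exact ⟨su2Mat a b, su2Mat_unitary_and_det_eq_one hab, nvec_su2Mat a b⟩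

lemma hopfMap_eq_hopfMap_iff {a b c d : ℂ} (hab : normSq a + normSq b = 1)
    (hcd : normSq c + normSq d = 1) :
    hopfMap a b = hopfMap c d ↔ ∃ p : ℂ, normSq p = 1 ∧ c = p * a ∧ d = p * b := by
  refine ⟨exists_mul_of_hopfMap_eq hab hcd, ?_⟩
  rintro ⟨p, hp, rfl, rfl⟩
  exact (hopfMap_mul_left hp a b).symm

lemma normSq_eq_one_iff_exists_exp {p : ℂ} : normSq p = 1 ↔ ∃ θ : ℝ, exp (-θ * I) = p := by
  rw [normSq_eq_norm_sq, pow_eq_one_iff_of_nonneg (norm_nonneg p) two_ne_zero, norm_eq_one_iff]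
  constructor
  · rintro ⟨θ, rfl⟩
    exact ⟨-θ, by push_cast; ring_nf⟩
  · rintro ⟨θ, rfl⟩
    exact ⟨-θ, by push_cast; ring_nf⟩

lemma conj_exp_neg_mul_I (θ : ℝ) : conj (exp (-θ * I)) = exp (θ * I) := by
  rw [← exp_conj, map_mul, map_neg, conj_ofReal, conj_I, neg_mul_neg]

lemma nvec_eq_nvec_iff {U V : Matrix (Fin 2) (Fin 2) ℂ} (hU : Uᴴ * U = 1) (hdetU : U.det = 1)
    (hV : Vᴴ * V = 1) (hdetV : V.det = 1) :
    nvec U = nvec V ↔ ∃ θ : ℝ, V * U⁻¹ = diagonal ![exp (-θ * I), exp (θ * I)] := by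
  obtain ⟨a, b, hab, rfl⟩ := exists_eq_su2Mat hU hdetU
  obtain ⟨c, d, hcd, rfl⟩ := exists_eq_su2Mat hV hdetV
  have hdiv (D : Matrix (Fin 2) (Fin 2) ℂ) :
      su2Mat c d * (su2Mat a b)⁻¹ = D ↔ su2Mat c d = D * su2Mat a b := by
    rw [inv_eq_left_inv hU]
    constructor
    · rintro rfl
      rw [Matrix.mul_assoc, hU, Matrix.mul_one]
    · intro h
      rw [h, Matrix.mul_assoc, mul_eq_one_comm.1 hU, Matrix.mul_one]
  simp_rw [hdiv, nvec_su2Mat, hopfMap_eq_hopfMap_iff hab hcd, normSq_eq_one_iff_exists_exp,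
    ← conj_exp_neg_mul_I, diagonal_mul_su2Mat, su2Mat_inj]
  constructor
  · rintro ⟨p, ⟨θ, rfl⟩, h⟩
    exact ⟨θ, h⟩
  · rintro ⟨θ, h⟩
    exact ⟨_, ⟨θ, rfl⟩, h⟩

/-- For `U ∈ SU(2)`: (1) `n(U)` is a unit vector; (2) `n` maps `SU(2)` onto the unit
sphere `S² ⊂ ℝ³`; (3) `n(U) = n(V)` iff `V U⁻¹ = diag(e^{−iθ}, e^{iθ})` for some real `θ`.
Hence `n` induces a bijection between the right coset space `A\SU(2)`, where `A` is the
subgroup of diagonal matrices in `SU(2)`, and the unit sphere `S²`. -/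
theorem stmt_19 :
    (∀ U : Matrix (Fin 2) (Fin 2) ℂ,
      U.conjTranspose * U = 1 ∧ U.det = 1 →
      ∑ i : Fin 3, nvec U i ^ 2 = 1) ∧
    (∀ v : Fin 3 → ℝ, (∑ i : Fin 3, v i ^ 2 = 1) →
      ∃ U : Matrix (Fin 2) (Fin 2) ℂ,
        (U.conjTranspose * U = 1 ∧ U.det = 1) ∧ nvec U = v) ∧
    (∀ U V : Matrix (Fin 2) (Fin 2) ℂ,
      U.conjTranspose * U = 1 ∧ U.det = 1 →
      V.conjTranspose * V = 1 ∧ V.det = 1 →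
      (nvec U = nvec V ↔
        ∃ θ : ℝ, V * U⁻¹ =
          Matrix.diagonal ![Complex.exp (-(θ : ℂ) * Complex.I),
            Complex.exp ((θ : ℂ) * Complex.I)])) := by
  exact ⟨fun U hU => sum_nvec_sq hU.1 hU.2, fun v hv => exists_nvec_eq hv,
    fun U V hU hV => nvec_eq_nvec_iff hU.1 hU.2 hV.1 hV.2⟩
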